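/- arXiv:math/0608759 — 4 statements merged into one kernel-verified Lean document; each statement's English description precedes it below -/
import Mathlib

section
/- Let f(z) = z^D + a_2 z^{D−2} + ⋯ + a_{D−1} z + a_D be a monic centered polynomial of degree D ≥ 2 with complex coefficients, and set G^n(z) = D^{−n} log^+ |f^n(z)|. Then for every z ∈ ℂ the sequence G^n(z) converges to a limit G(z), and for all z ∈ ℂ and all n ≥ 0, |G(z) − G^n(z)| ≤ D^{−n} · log(1 + Σ_{i=2}^D |a_i|). -/
/-!
Write `f w = w ^ D + g w` with `‖g w‖ ≤ S · max ‖w‖ 1 ^ (D - 2)`, where `S = ∑ ‖aᵢ‖`. Comparing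
`w ^ D` with `f w` in both directions gives `|log⁺ ‖f w‖ - D · log⁺ ‖w‖| ≤ (D - 1) · log (1 + S)`.
Along an orbit, `D⁻ⁿ · log⁺ ‖fⁿ z‖` therefore moves by at most `(D⁻ⁿ - D⁻ⁿ⁻¹) · log (1 + S)` per
step: it is Cauchy with geometric control, and the tail sums to the stated error.
-/

open Finset Filter Topology Polynomial

theorem Polynomial.Monic.eval_sub_pow_natDegree {R : Type*} [CommRing R] [Nontrivial R] {f : R[X]}
    (hf : f.Monic) (hc : f.coeff (f.natDegree - 1) = 0) (w : R) :
    f.eval w - w ^ f.natDegree = ∑ i ∈ range (f.natDegree - 1), f.coeff i * w ^ i := by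
  have hD : f.natDegree - 1 + 1 = f.natDegree := by
    refine Nat.sub_add_cancel (Nat.one_le_iff_ne_zero.2 fun h => ?_)
    have h1 := hf.coeff_natDegree
    rw [h] at h1 hc
    exact one_ne_zero (h1.symm.trans hc)
  nth_rewrite 1 [hf.as_sum]
  rw [← hD, sum_range_succ, hD, hc]
  simp [eval_finsetSum]

theorem Polynomial.Monic.norm_eval_sub_pow_natDegree_le {𝕜 : Type*} [NormedField 𝕜] {f : 𝕜[X]}
    (hf : f.Monic) (hc : f.coeff (f.natDegree - 1) = 0) (w : 𝕜) :
    ‖f.eval w - w ^ f.natDegree‖ ≤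
      (∑ i ∈ range (f.natDegree - 1), ‖f.coeff i‖) * max ‖w‖ 1 ^ (f.natDegree - 2) := by
  rw [hf.eval_sub_pow_natDegree hc, sum_mul]
  refine (norm_sum_le _ _).trans (sum_le_sum fun i hi => ?_)
  rw [norm_mul, norm_pow]
  gcongr
  calc ‖w‖ ^ i ≤ max ‖w‖ 1 ^ i := by gcongr; exact le_max_left _ _
    _ ≤ max ‖w‖ 1 ^ (f.natDegree - 2) :=
      pow_le_pow_right₀ (le_max_right _ _) (by simp only [mem_range] at hi; omega)

namespace Real

variable {a t S : ℝ} {D : ℕ}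

theorem max_le_one_add_mul_max_pow (ht : 0 ≤ t) (hS : 0 ≤ S) (h : a ≤ t ^ D + S * max t 1 ^ (D - 2)) :
    max a 1 ≤ (1 + S) * max t 1 ^ D := by
  have hM : 1 ≤ max t 1 := le_max_right _ _
  have hMD : 1 ≤ max t 1 ^ D := one_le_pow₀ hM
  refine max_le ?_ (hMD.trans (le_mul_of_one_le_left (by positivity) (by linarith)))
  calc a ≤ t ^ D + S * max t 1 ^ (D - 2) := h
    _ ≤ max t 1 ^ D + S * max t 1 ^ D := by
      gcongr
      · exact le_max_left _ _
      · omega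
    _ = (1 + S) * max t 1 ^ D := by ring

theorem max_pow_le_one_add_pow_mul_max (hD : 2 ≤ D) (hS : 0 ≤ S)
    (h : t ^ D ≤ a + S * max t 1 ^ (D - 2)) : max t 1 ^ D ≤ (1 + S) ^ (D - 1) * max a 1 := by
  have hS1 : 1 ≤ 1 + S := by linarith
  rcases le_total t 1 with ht | ht
  · rw [max_eq_right ht, one_pow]
    exact one_le_mul_of_one_le_of_one_le (one_le_pow₀ hS1) (le_max_right _ _)
  rw [max_eq_left ht] at h ⊢
  rcases le_or_gt (t ^ 2) (1 + S) with hsmall | hlarge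
  · calc t ^ D ≤ (t ^ 2) ^ (D - 1) := by rw [← pow_mul]; exact pow_le_pow_right₀ ht (by omega)
      _ ≤ (1 + S) ^ (D - 1) := by gcongr
      _ ≤ (1 + S) ^ (D - 1) * max a 1 := le_mul_of_one_le_right (by positivity) (le_max_right _ _)
  · have hDt : t ^ D = t ^ (D - 2) * t ^ 2 := by rw [← pow_add, Nat.sub_add_cancel hD]
    -- `t ^ 2 - S ≥ t ^ 2 / (1 + S)` once `t ^ 2 ≥ 1 + S`
    have hkey : 0 ≤ S * t ^ (D - 2) * (t ^ 2 - 1 - S) := by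
      have : 0 ≤ t ^ 2 - 1 - S := by linarith
      positivity
    calc t ^ D ≤ (1 + S) * a := by nlinarith
      _ ≤ (1 + S) ^ 1 * max a 1 := by rw [pow_one]; gcongr; exact le_max_left _ _
      _ ≤ (1 + S) ^ (D - 1) * max a 1 := by
        gcongr
        omega

theorem abs_log_max_sub_mul_log_max_le (hD : 2 ≤ D) (ht : 0 ≤ t) (hS : 0 ≤ S)
    (h : |a - t ^ D| ≤ S * max t 1 ^ (D - 2)) :
    |log (max a 1) - D * log (max t 1)| ≤ (D - 1) * log (1 + S) := by
  obtain ⟨hlow, hup⟩ := abs_le.1 h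
  have hupper : max a 1 ≤ (1 + S) * max t 1 ^ D :=
    max_le_one_add_mul_max_pow ht hS (by linarith)
  have hlower : max t 1 ^ D ≤ (1 + S) ^ (D - 1) * max a 1 :=
    max_pow_le_one_add_pow_mul_max hD hS (by linarith)
  have hlog_upper : log (max a 1) ≤ log (1 + S) + D * log (max t 1) := by
    have := log_le_log (by positivity) hupper
    rwa [log_mul (by positivity) (by positivity), log_pow] at this
  have hlog_lower : D * log (max t 1) ≤ (D - 1) * log (1 + S) + log (max a 1) := by
    have := log_le_log (by positivity) hlower
    rwa [log_mul (by positivity) (by positivity), log_pow, log_pow,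
      Nat.cast_sub (by omega), Nat.cast_one] at this
  have hC : 0 ≤ log (1 + S) := log_nonneg (by linarith)
  have hD1 : (1 : ℝ) ≤ D - 1 := by
    have : (2 : ℝ) ≤ D := by exact_mod_cast hD
    linarith
  rw [abs_le]
  constructor <;> nlinarith

end Real

theorem Polynomial.Monic.abs_log_max_norm_eval_sub_le {𝕜 : Type*} [NormedField 𝕜] {f : 𝕜[X]}
    (hf : f.Monic) (hc : f.coeff (f.natDegree - 1) = 0) (hD : 2 ≤ f.natDegree) (w : 𝕜) :
    |Real.log (max ‖f.eval w‖ 1) - f.natDegree * Real.log (max ‖w‖ 1)| ≤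
      (f.natDegree - 1) * Real.log (1 + ∑ i ∈ range (f.natDegree - 1), ‖f.coeff i‖) := by
  refine Real.abs_log_max_sub_mul_log_max_le hD (norm_nonneg w)
    (sum_nonneg fun _ _ => norm_nonneg _) ?_
  rw [← norm_pow]
  exact (abs_norm_sub_norm_le _ _).trans (hf.norm_eval_sub_pow_natDegree_le hc w)

theorem Real.exists_tendsto_inv_pow_mul_of_abs_sub_mul_le {d C : ℝ} (hd : 1 < d) {u : ℕ → ℝ}
    (hu : ∀ n, |u (n + 1) - d * u n| ≤ (d - 1) * C) :
    ∃ L, Tendsto (fun n => (d ^ n)⁻¹ * u n) atTop (𝓝 L) ∧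
      ∀ n, |L - (d ^ n)⁻¹ * u n| ≤ (d ^ n)⁻¹ * C := by
  have hd0 : 0 < d := one_pos.trans hd
  have hr : d⁻¹ < 1 := inv_lt_one_of_one_lt₀ hd
  have hstep : ∀ n, dist ((d ^ n)⁻¹ * u n) ((d ^ (n + 1))⁻¹ * u (n + 1)) ≤
      C * (1 - d⁻¹) * d⁻¹ ^ n := by
    intro n
    have hsub : (d ^ (n + 1))⁻¹ * u (n + 1) - (d ^ n)⁻¹ * u n =
        (d ^ (n + 1))⁻¹ * (u (n + 1) - d * u n) := by
      field_simp; ring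
    rw [dist_comm, Real.dist_eq, hsub, abs_mul, abs_of_pos (by positivity)]
    calc (d ^ (n + 1))⁻¹ * |u (n + 1) - d * u n| ≤ (d ^ (n + 1))⁻¹ * ((d - 1) * C) := by
          gcongr; exact hu n
      _ = C * (1 - d⁻¹) * d⁻¹ ^ n := by rw [inv_pow, pow_succ]; field_simp
  obtain ⟨L, hL⟩ := cauchySeq_tendsto_of_complete (cauchySeq_of_le_geometric _ _ hr hstep)
  refine ⟨L, hL, fun n => ?_⟩
  have h := dist_le_of_le_geometric_of_tendsto _ _ hr hstep hL n
  rw [dist_comm, Real.dist_eq] at h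
  calc _ ≤ _ := h
    _ = (d ^ n)⁻¹ * C := by
      rw [mul_div_right_comm, mul_div_cancel_right₀ _ (sub_ne_zero.2 hr.ne'), inv_pow, mul_comm]

/-- **Convergence of the escape rate with explicit error bound.**
Let `f(z) = z^D + a₂ z^{D−2} + ⋯ + a_D` be a monic centered polynomial of
degree `D ≥ 2` and set `Gⁿ(z) = D^{−n} log⁺|fⁿ(z)|`, where
`log⁺ t = log (max t 1)`.  Then for every `z` the sequence `Gⁿ(z)` converges
to a limit `G(z)`, and for all `z` and all `n ≥ 0`,
`|G(z) − Gⁿ(z)| ≤ D^{−n} · log(1 + Σᵢ |aᵢ|)`.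
(The coefficients `a₂, …, a_D` are `f.coeff (D−2), …, f.coeff 0`.) -/
theorem escape_rate_exists_with_error_bound
    (D : ℕ) (hD : 2 ≤ D) (f : Polynomial ℂ)
    (hmonic : f.Monic) (hdeg : f.natDegree = D) (hcent : f.coeff (D - 1) = 0) :
    ∃ G : ℂ → ℝ, ∀ z : ℂ,
      Filter.Tendsto
        (fun n : ℕ =>
          (D : ℝ) ^ (-(n : ℤ)) *
            Real.log (max ‖(fun w => f.eval w)^[n] z‖ 1))
        Filter.atTop (nhds (G z)) ∧
      ∀ n : ℕ,
        |G z -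
            (D : ℝ) ^ (-(n : ℤ)) *
              Real.log (max ‖(fun w => f.eval w)^[n] z‖ 1)| ≤
          (D : ℝ) ^ (-(n : ℤ)) *
            Real.log (1 + ∑ i ∈ Finset.range (D - 1), ‖f.coeff i‖) := by
  subst hdeg
  have hD' : (1 : ℝ) < f.natDegree := by exact_mod_cast hD
  choose G hG using fun z => Real.exists_tendsto_inv_pow_mul_of_abs_sub_mul_le hD'
    (u := fun n => Real.log (max ‖(fun w => f.eval w)^[n] z‖ 1)) fun n => by
      rw [Function.iterate_succ_apply']
      exact hmonic.abs_log_max_norm_eval_sub_le hcent hD _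
  refine ⟨G, fun z => ?_⟩
  simp only [zpow_neg, zpow_natCast]
  exact hG z
end

section
/- Let F : T → T be a polynomial-like branched covering of a simplicial tree with global degree D = deg(F), and let V_k(T) = {v ∈ V(T) : h(v) = −k·N(F)}. Then for every k ≥ 1: D^k ≥ |V_k(T)| ≥ 2 + D + D² + ⋯ + D^{k−1} ≥ D^k/(D − 1). -/
open SimpleGraph Function Opposite

/-- A locally finite simplicial tree together with a self-map that is a
branched covering: a simplicial map (edges map onto edges) such that the
induced map on edges adjacent to any vertex is surjective onto the edges
adjacent to the image vertex, and every vertex has finitely many preimages. -/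
structure TreeDyn (V : Type) where
  G : SimpleGraph V
  isTree : G.IsTree
  locFin : ∀ v : V, (G.neighborSet v).Finite
  F : V → V
  adjMap : ∀ ⦃v w : V⦄, G.Adj v w → G.Adj (F v) (F w)
  edgeSurj : ∀ ⦃v w' : V⦄, G.Adj (F v) w' → ∃ w : V, G.Adj v w ∧ F w = w'
  finFibers : ∀ v' : V, {v : V | F v = v'}.Finite

namespace TreeDyn

variable {V : Type}

/-- A local degree function for the branched covering `T.F`: positive on
vertices and edges (edges adjacent to `v` are recorded by their other
endpoint), symmetric on edges, satisfying the Riemann–Hurwitz style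
inequality `2 deg(v) - 2 ≥ Σ (deg e - 1)` at each vertex, and the local
equality `deg v = Σ {deg e' : e' adjacent to v, F(e') = F(e)}` for each
edge `e` adjacent to `v`. -/
def IsLocalDeg (T : TreeDyn V) (dV : V → ℕ) (dE : V → V → ℕ) : Prop :=
  (∀ v w : V, dE v w = dE w v) ∧
  (∀ v : V, 0 < dV v) ∧
  (∀ ⦃v w : V⦄, T.G.Adj v w → 0 < dE v w) ∧
  (∀ v : V, (∑ᶠ w ∈ T.G.neighborSet v, (dE v w - 1)) + 2 ≤ 2 * dV v) ∧
  (∀ ⦃v w : V⦄, T.G.Adj v w →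
    dV v = ∑ᶠ w' ∈ {w' : V | T.G.Adj v w' ∧ T.F w' = T.F w}, dE v w')

/-- `x` and `y` are in the same grand orbit if `F^[n] x = F^[m] y` for some `n, m > 0`. -/
def GrandOrbit (T : TreeDyn V) (x y : V) : Prop :=
  ∃ n m : ℕ, 0 < n ∧ 0 < m ∧ T.F^[n] x = T.F^[m] y

end TreeDyn

/-- The natural topology on the space of ends of a graph: the subspace
topology induced from the product of the (discrete) spaces of components
of complements of finite sets. -/
def endTop {V : Type} (G : SimpleGraph V) : TopologicalSpace G.end :=
  TopologicalSpace.induced Subtype.val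
    (⨅ K : (Finset V)ᵒᵖ, TopologicalSpace.induced (fun f => f K) ⊥)

/-- An end is isolated if it is an isolated point of the space of ends. -/
def IsIsolatedEnd {V : Type} (G : SimpleGraph V) (e : G.end) : Prop :=
  @IsOpen G.end (endTop G) {e}

namespace TreeDyn

variable {V : Type}

/-- `T` is polynomial-like with distinguished end `infty`:
(II) a local degree function exists, (I) `infty` is the unique isolated end,
(III) no vertex has valence one, and (IV) the grand orbit of every vertex
contains a vertex of valence at least three. -/
def IsPolyLike (T : TreeDyn V) (infty : T.G.end) : Prop :=
  (∃ dV dE, T.IsLocalDeg dV dE) ∧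
  IsIsolatedEnd T.G infty ∧
  (∀ e : T.G.end, IsIsolatedEnd T.G e → e = infty) ∧
  (∀ v : V, (T.G.neighborSet v).ncard ≠ 1) ∧
  (∀ v : V, ∃ w : V, T.GrandOrbit v w ∧ 3 ≤ (T.G.neighborSet w).ncard)

/-- The vertex `x` lies below the vertex `v` (the path from `x` to the
end `infty` passes through `v`): either `x = v`, or `x` and `infty`
determine different components of the complement of `{v}`. -/
def Below (T : TreeDyn V) (infty : T.G.end) (v x : V) : Prop :=
  x = v ∨ ∃ h : x ∉ (({v} : Finset V) : Set V),
    T.G.componentComplMk h ≠ infty.val (op ({v} : Finset V))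

/-- The end `p` lies below the vertex `v` (the path from `p` to `infty`
passes through `v`). -/
def EndBelow (T : TreeDyn V) (infty : T.G.end) (v : V) (p : T.G.end) : Prop :=
  p.val (op ({v} : Finset V)) ≠ infty.val (op ({v} : Finset V))

/-- `v₀` is the base of the tree: the vertex of valence ≥ 3 closest to
`infty`, i.e. every vertex of valence ≥ 3 lies below it. -/
def IsBase (T : TreeDyn V) (infty : T.G.end) (v₀ : V) : Prop :=
  3 ≤ (T.G.neighborSet v₀).ncard ∧
  ∀ w : V, 3 ≤ (T.G.neighborSet w).ncard → T.Below infty v₀ w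

open Classical in
/-- The combinatorial height relative to the base `v₀`: `|h v|` is the
graph distance to `v₀`, with `h v ≥ 0` exactly when `v` lies on the ray
from `v₀` to `infty` (i.e. `v₀` lies below `v`). -/
noncomputable def height (T : TreeDyn V) (infty : T.G.end) (v₀ : V) (v : V) : ℤ :=
  if T.Below infty v v₀ then (T.G.dist v₀ v : ℤ) else -(T.G.dist v₀ v : ℤ)

/-- `Dg` is the global degree of `T.F`: for every edge `{v,w}`, the sum of
the degrees of the edges mapping onto it equals `Dg`. -/
def IsGlobalDeg (T : TreeDyn V) (dE : V → V → ℕ) (Dg : ℕ) : Prop :=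
  ∀ ⦃v w : V⦄, T.G.Adj v w →
    Dg = ∑ᶠ a ∈ {a : V | T.F a = v}, ∑ᶠ b ∈ {b : V | T.G.Adj a b ∧ T.F b = w}, dE a b

/-- The critical multiplicity of a vertex. -/
noncomputable def multV (T : TreeDyn V) (dV : V → ℕ) (dE : V → V → ℕ) (v : V) : ℕ :=
  2 * dV v - 2 - ∑ᶠ w ∈ T.G.neighborSet v, (dE v w - 1)

/-- The critical multiplicity of an end `p ≠ infty`: the limiting
(= minimal) value of `dV` along the path from `infty` to `p`, minus one. -/
noncomputable def multEnd (T : TreeDyn V) (infty : T.G.end) (dV : V → ℕ) (p : T.G.end) : ℕ :=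
  sInf {d : ℕ | ∃ v : V, T.EndBelow infty v p ∧ dV v = d} - 1

/-- `μ` is the mass function: `μ v = 1` for `h(v) ≥ 0` and
`μ(F v) = (deg F / deg v) · μ v`. -/
def IsMass (T : TreeDyn V) (infty : T.G.end) (v₀ : V) (dV : V → ℕ) (Dg : ℕ)
    (μ : V → ℚ) : Prop :=
  (∀ v : V, 0 ≤ T.height infty v₀ v → μ v = 1) ∧
  (∀ v : V, μ (T.F v) = ((Dg : ℚ) / (dV v : ℚ)) * μ v)

end TreeDyn

/-!
Below the base, heights behave like depth in a rooted tree: since no vertex of valence `≥ 3`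
lies above `v₀`, a vertex of negative height has one neighbour one level up (its parent) and all
others one level down. As `F` raises heights by `N`, the local degree at such a vertex is the
degree of its parent edge, and the vertices of height `-(j + N)` are exactly the preimages of
those of height `-j`. Summing local degrees over fibres gives
`|V_{j+N}| + e(j + N) = D |V_j|`, where `e(j) = ∑_{h(v) = -j} (deg v - 1)`.
Riemann–Hurwitz at a vertex of negative height bounds the excess of its children by
`deg v - 1`, so `e` is non-increasing on `j ≥ 1`; at the base, which has at least two edges going
down, it gives `e(1) ≤ D - 2`. Hence `D a_k - (D - 2) ≤ a_{k+1} ≤ D a_k` for `a_k = |V_{kN}|`,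
with `a_0 = 1`, and both bounds follow by induction.
-/

namespace SimpleGraph

variable {V : Type*} {G : SimpleGraph V}

lemma componentComplMk_eq_iff_exists_walk {K : Set V} {a b : V} (ha : a ∉ K) (hb : b ∉ K) :
    G.componentComplMk ha = G.componentComplMk hb ↔ ∃ p : G.Walk a b, ∀ y ∈ p.support, y ∉ K := by
  rw [componentComplMk, componentComplMk, ConnectedComponent.eq]
  constructor
  · rintro ⟨q⟩
    refine ⟨q.map (Embedding.induce Kᶜ).toHom, fun y hy => ?_⟩
    have hy : y ∈ (q.map (Embedding.induce Kᶜ).toHom).support := hy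
    rw [Walk.support_map, List.mem_map] at hy
    obtain ⟨⟨y, hyK⟩, -, rfl⟩ := hy
    exact hyK
  · rintro ⟨p, hp⟩
    exact ⟨p.induce Kᶜ hp⟩

open CategoryTheory in
lemma end_exists_common_vertex (e : G.end) (K L : Finset V) :
    ∃ c, (∃ hK : c ∉ (K : Set V), G.componentComplMk hK = e.val (op K)) ∧
      ∃ hL : c ∉ (L : Set V), G.componentComplMk hL = e.val (op L) := by
  classical
  obtain ⟨c, hc, hce⟩ := (e.val (op (K ∪ L))).exists_eq_mk
  exact ⟨c,
    ⟨_, (end_hom_mk_of_mk G e.2 (opHomOfLE Finset.subset_union_left) hc hce.symm).symm⟩,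
    ⟨_, (end_hom_mk_of_mk G e.2 (opHomOfLE Finset.subset_union_right) hc hce.symm).symm⟩⟩

lemma Adj.dist_le_dist_add_one {u v : V} (hadj : G.Adj u v) (w : V) :
    G.dist w u ≤ G.dist w v + 1 := by
  have := hadj.diff_dist_adj (u := w)
  omega

lemma three_le_ncard_neighborSet {v a b c : V} (hfin : (G.neighborSet v).Finite)
    (ha : G.Adj v a) (hb : G.Adj v b) (hc : G.Adj v c) (hab : a ≠ b) (hac : a ≠ c) (hbc : b ≠ c) :
    3 ≤ (G.neighborSet v).ncard := by
  rw [← Set.ncard_eq_three.mpr ⟨a, b, c, hab, hac, hbc, rfl⟩]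
  exact Set.ncard_le_ncard (by rintro _ (rfl | rfl | rfl) <;> assumption) hfin

lemma Connected.exists_adj_dist_add_one_eq (hc : G.Connected) {r v : V} (hv : v ≠ r) :
    ∃ u, G.Adj v u ∧ G.dist r u + 1 = G.dist r v := by
  obtain ⟨p, hp⟩ := hc.exists_walk_length_eq_dist v r
  cases p with
  | nil => exact absurd rfl hv
  | @cons _ u _ hadj q =>
    refine ⟨u, hadj, le_antisymm ?_ ?_⟩
    · rw [dist_comm (u := r) (v := v), ← hp, Walk.length_cons, dist_comm]
      exact Nat.add_le_add_right (dist_le q) 1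
    · have := hc.dist_triangle (u := r) (v := u) (w := v)
      rw [dist_comm (u := u), dist_eq_one_iff_adj.mpr hadj] at this
      exact this

lemma Connected.finite_setOf_dist_eq (hc : G.Connected) (hfin : ∀ v, (G.neighborSet v).Finite)
    (r : V) (n : ℕ) : {v | G.dist r v = n}.Finite := by
  induction n with
  | zero => simp [hc.dist_eq_zero_iff]
  | succ n ih =>
    refine (ih.biUnion fun u _ => hfin u).subset fun v hv => ?_
    have hvr : v ≠ r := by
      rintro rfl
      simp at hv
    obtain ⟨u, hadj, hd⟩ := hc.exists_adj_dist_add_one_eq hvr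
    exact Set.mem_biUnion (x := u) (by simp only [Set.mem_ofPred_eq] at hv ⊢; omega) hadj.symm

namespace IsTree

lemma length_eq_dist_of_isPath (hT : G.IsTree) {a b : V} {p : G.Walk a b} (hp : p.IsPath) :
    p.length = G.dist a b := by
  obtain ⟨q, hq, hql⟩ := hT.connected.exists_path_of_dist a b
  rw [(hT.existsUnique_path a b).unique hp hq, hql]

lemma mem_support_iff_dist_add_dist (hT : G.IsTree) {a b x : V} {p : G.Walk a b} (hp : p.IsPath) :
    x ∈ p.support ↔ G.dist a x + G.dist x b = G.dist a b := by
  classical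
  constructor
  · intro hx
    have hlen := congrArg Walk.length (p.take_spec hx)
    rw [Walk.length_append, hT.length_eq_dist_of_isPath (hp.takeUntil hx),
      hT.length_eq_dist_of_isPath (hp.dropUntil hx), hT.length_eq_dist_of_isPath hp] at hlen
    exact hlen
  · intro hd
    obtain ⟨q₁, hq₁⟩ := hT.connected.exists_walk_length_eq_dist a x
    obtain ⟨q₂, hq₂⟩ := hT.connected.exists_walk_length_eq_dist x b
    have hq : (q₁.append q₂).IsPath :=
      Walk.isPath_of_length_eq_dist _ (by rw [Walk.length_append, hq₁, hq₂, hd])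
    rw [(hT.existsUnique_path a b).unique hp hq, Walk.mem_support_append_iff]
    exact Or.inl q₁.end_mem_support

lemma componentComplMk_singleton_eq_iff (hT : G.IsTree) {x a b : V}
    (ha : a ∉ (({x} : Finset V) : Set V)) (hb : b ∉ (({x} : Finset V) : Set V)) :
    G.componentComplMk ha = G.componentComplMk hb ↔ G.dist a x + G.dist x b ≠ G.dist a b := by
  classical
  rw [componentComplMk_eq_iff_exists_walk]
  constructor
  · rintro ⟨q, hq⟩ hd
    have hx := (hT.mem_support_iff_dist_add_dist q.bypass_isPath).mpr hd
    exact hq x (q.support_bypass_subset_support hx) (by simp)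
  · intro hd
    obtain ⟨p, hp, -⟩ := hT.connected.exists_path_of_dist a b
    refine ⟨p, fun y hy hyx => hd ?_⟩
    rw [Finset.coe_singleton, Set.mem_singleton_iff] at hyx
    exact (hT.mem_support_iff_dist_add_dist hp).mp (hyx ▸ hy)

lemma eq_of_adj_of_dist_add_one_eq (hT : G.IsTree) {r v u₁ u₂ : V} (h₁ : G.Adj v u₁)
    (h₂ : G.Adj v u₂)
    (hd₁ : G.dist r u₁ + 1 = G.dist r v) (hd₂ : G.dist r u₂ + 1 = G.dist r v) : u₁ = u₂ := by
  obtain ⟨p, hp, hpl⟩ := hT.connected.exists_path_of_dist v r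
  have hmem : ∀ u, G.Adj v u → G.dist r u + 1 = G.dist r v → u ∈ p.support := fun u hu hd => by
    rw [hT.mem_support_iff_dist_add_dist hp, dist_eq_one_iff_adj.mpr hu, dist_comm (u := v),
      dist_comm (u := u)]
    omega
  rw [hT.isAcyclic.eq_snd_of_adj_start hp h₁ (hmem _ h₁ hd₁),
    hT.isAcyclic.eq_snd_of_adj_start hp h₂ (hmem _ h₂ hd₂)]

end IsTree

end SimpleGraph

lemma le_pow_of_forall_le_mul {D : ℕ} {a : ℕ → ℕ} (h0 : a 0 ≤ 1) (h : ∀ k, a (k + 1) ≤ D * a k)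
    (k : ℕ) : a k ≤ D ^ k := by
  induction k with
  | zero => simpa using h0
  | succ k ih => exact (h k).trans (pow_succ' D k ▸ Nat.mul_le_mul_left D ih)

lemma mul_sum_Ico_pow_add_self {D k : ℕ} (hk : 1 ≤ k) :
    D * ∑ i ∈ Finset.Ico 1 k, D ^ i + D = ∑ i ∈ Finset.Ico 1 (k + 1), D ^ i := by
  rw [Finset.sum_eq_sum_Ico_succ_bot (by omega : 1 < k + 1), pow_one, add_comm, Finset.mul_sum,
    ← Finset.sum_Ico_add' (fun i => D ^ i) 1 k 1]
  simp only [pow_succ']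

lemma two_add_sum_Ico_pow_le {D : ℕ} {a : ℕ → ℕ} (h0 : 1 ≤ a 0)
    (h : ∀ k, D * a k + 2 ≤ a (k + 1) + D) {k : ℕ} (hk : 1 ≤ k) :
    2 + ∑ i ∈ Finset.Ico 1 k, D ^ i ≤ a k := by
  induction k, hk using Nat.le_induction with
  | base =>
    have h1 : D * a 0 + 2 ≤ a 1 + D := h 0
    have := Nat.mul_le_mul_left D h0
    simp only [Finset.Ico_self, Finset.sum_empty]
    omega
  | succ k hk ih =>
    have := h k
    have := Nat.mul_le_mul_left D ih
    rw [mul_add] at this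
    rw [← mul_sum_Ico_pow_add_self hk]
    omega

lemma pow_div_sub_one_le_two_add_sum_Ico {K : Type*} [Field K] [LinearOrder K]
    [IsStrictOrderedRing K] {x : K} (hx : 2 ≤ x) {k : ℕ} (hk : 1 ≤ k) :
    x ^ k / (x - 1) ≤ 2 + ∑ i ∈ Finset.Ico 1 k, x ^ i := by
  have hx₁ : 0 < x - 1 := by linarith
  rw [geom_sum_Ico (by linarith : x ≠ 1) hk, pow_one, div_le_iff₀ hx₁, add_mul,
    div_mul_cancel₀ _ hx₁.ne']
  linarith

lemma Finset.card_add_sum_sub_one {ι : Type*} {s : Finset ι} {f : ι → ℕ} (hf : ∀ i ∈ s, 0 < f i) :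
    s.card + ∑ i ∈ s, (f i - 1) = ∑ i ∈ s, f i := by
  rw [Finset.card_eq_sum_ones, ← Finset.sum_add_distrib]
  exact Finset.sum_congr rfl fun i hi => by have := hf i hi; omega

namespace TreeDyn

variable {V : Type} (T : TreeDyn V) (infty : T.G.end)

/-- Turns the end-theoretic `Below` into distance arithmetic: for any vertex `c` on the `infty`
side of `x`, `y` lies below `x` iff `x` is on the geodesic from `y` to `c`. -/
lemma below_iff_dist {x y c : V} (hcx : c ∉ (({x} : Finset V) : Set V))
    (hc : T.G.componentComplMk hcx = infty.val (op {x})) :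
    T.Below infty x y ↔ T.G.dist y x + T.G.dist x c = T.G.dist y c := by
  by_cases hyx : y = x
  · subst hyx
    simp [Below]
  · have hy : y ∉ (({x} : Finset V) : Set V) := by simpa using hyx
    rw [Below, or_iff_right hyx, exists_prop_of_true hy, ← hc, Ne,
      T.isTree.componentComplMk_singleton_eq_iff, not_not]

lemma eq_of_below_of_below {u w : V} (h₁ : T.Below infty u w) (h₂ : T.Below infty w u) :
    u = w := by
  obtain ⟨c, ⟨hcu, hcu'⟩, hcw, hcw'⟩ := end_exists_common_vertex infty {u} {w}
  rw [T.below_iff_dist infty hcu hcu', dist_comm (u := w) (v := u)] at h₁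
  rw [T.below_iff_dist infty hcw hcw'] at h₂
  exact T.isTree.connected.dist_eq_zero_iff.mp (by omega)

lemma below_of_adj {y u w : V} (hw : T.Below infty w y) (hadj : T.G.Adj u w)
    (hd : T.G.dist y u + 1 = T.G.dist y w) : T.Below infty u y := by
  obtain ⟨c, ⟨hcu, hcu'⟩, hcw, hcw'⟩ := end_exists_common_vertex infty {u} {w}
  rw [T.below_iff_dist infty hcw hcw'] at hw
  rw [T.below_iff_dist infty hcu hcu']
  have := T.isTree.connected.dist_triangle (u := y) (v := u) (w := c)
  have := hadj.dist_le_dist_add_one c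
  rw [dist_comm (u := c), dist_comm (u := c)] at this
  omega

lemma eq_of_adj_of_below {y x w₁ w₂ : V} (h₁ : T.G.Adj x w₁) (h₂ : T.G.Adj x w₂)
    (hd₁ : T.G.dist y w₁ = T.G.dist y x + 1) (hd₂ : T.G.dist y w₂ = T.G.dist y x + 1)
    (hb₁ : T.Below infty w₁ y) (hb₂ : T.Below infty w₂ y) : w₁ = w₂ := by
  obtain ⟨c, ⟨hc₁, hc₁'⟩, hc₂, hc₂'⟩ := end_exists_common_vertex infty {w₁} {w₂}
  rw [T.below_iff_dist infty hc₁ hc₁', dist_comm (u := w₁)] at hb₁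
  rw [T.below_iff_dist infty hc₂ hc₂', dist_comm (u := w₂)] at hb₂
  have hyc := T.isTree.connected.dist_triangle (u := y) (v := x) (w := c)
  rw [dist_comm (u := x)] at hyc
  have hx₁ := h₁.dist_le_dist_add_one c
  have hx₂ := h₂.dist_le_dist_add_one c
  exact T.isTree.eq_of_adj_of_dist_add_one_eq (r := c) h₁ h₂ (by omega) (by omega)

variable (v₀ : V)

open Classical in
noncomputable def parent (v : V) : V :=
  if hv : v = v₀ then v₀ else (T.isTree.connected.exists_adj_dist_add_one_eq hv).choose

variable {v₀}

lemma parent_spec {v : V} (hv : v ≠ v₀) :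
    T.G.Adj v (T.parent v₀ v) ∧ T.G.dist v₀ (T.parent v₀ v) + 1 = T.G.dist v₀ v := by
  rw [parent, dif_neg hv]
  exact (T.isTree.connected.exists_adj_dist_add_one_eq hv).choose_spec

lemma eq_parent {v u : V} (hv : v ≠ v₀) (hadj : T.G.Adj v u)
    (hd : T.G.dist v₀ u + 1 = T.G.dist v₀ v) : u = T.parent v₀ v :=
  T.isTree.eq_of_adj_of_dist_add_one_eq hadj (T.parent_spec hv).1 hd (T.parent_spec hv).2

/-- The ray from the base to `infty` has no side branches: this is where `IsBase` enters. -/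
lemma below_of_adj_of_isBase {u v : V} (hbase : T.IsBase infty v₀) (hu : T.Below infty u v₀)
    (hu₀ : u ≠ v₀) (hadj : T.G.Adj u v) (hd : T.G.dist v₀ v = T.G.dist v₀ u + 1) :
    T.Below infty v v₀ := by
  by_contra hv
  obtain ⟨c, ⟨hcu, hcu'⟩, hcv, hcv'⟩ := end_exists_common_vertex infty {u} {v}
  have hu_c := (T.below_iff_dist infty hcu hcu').mp hu
  have hv_c := mt (T.below_iff_dist infty hcv hcv').mpr hv
  rw [dist_comm (u := u) (v := c)] at hu_c
  rw [dist_comm (u := v) (v := c)] at hv_c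
  have huc : u ≠ c := by
    rintro rfl
    simp at hcu
  obtain ⟨hu', hdu'⟩ := T.parent_spec hu₀
  obtain ⟨x, hx, hdx⟩ := T.isTree.connected.exists_adj_dist_add_one_eq huc
  have hv₀x := T.isTree.connected.dist_triangle (u := v₀) (v := x) (w := c)
  rw [dist_comm (u := x) (v := c)] at hv₀x
  have hval : 3 ≤ (T.G.neighborSet u).ncard := by
    refine three_le_ncard_neighborSet (T.locFin u) hu' hadj hx ?_ ?_ ?_
    · rintro rfl
      omega
    · rintro rfl
      omega
    · rintro rfl
      omega
  exact hu₀ (T.eq_of_below_of_below infty hu (hbase.2 u hval))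

lemma height_of_below {v : V} (h : T.Below infty v v₀) :
    T.height infty v₀ v = T.G.dist v₀ v :=
  if_pos h

lemma height_of_not_below {v : V} (h : ¬T.Below infty v v₀) :
    T.height infty v₀ v = -T.G.dist v₀ v :=
  if_neg h

lemma natAbs_height (v : V) : (T.height infty v₀ v).natAbs = T.G.dist v₀ v := by
  unfold height
  split_ifs <;> simp

lemma height_neg_iff {v : V} : T.height infty v₀ v < 0 ↔ ¬T.Below infty v v₀ := by
  by_cases h : T.Below infty v v₀
  · simp [h, T.height_of_below infty h]
  · have := T.isTree.connected.pos_dist_of_ne fun hv => h (Or.inl hv)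
    simp only [h, T.height_of_not_below infty h, not_false_eq_true, iff_true]
    omega

lemma height_eq_zero_iff {v : V} : T.height infty v₀ v = 0 ↔ v = v₀ := by
  rw [← Int.natAbs_eq_zero, natAbs_height, T.isTree.connected.dist_eq_zero_iff, eq_comm]

lemma ne_of_height_neg {v : V} (hv : T.height infty v₀ v < 0) : v ≠ v₀ := by
  rintro rfl
  simp [(T.height_eq_zero_iff infty).mpr rfl] at hv

lemma height_parent (hbase : T.IsBase infty v₀) {v : V} (hv : T.height infty v₀ v < 0) :
    T.height infty v₀ (T.parent v₀ v) = T.height infty v₀ v + 1 := by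
  obtain ⟨hadj, hd⟩ := T.parent_spec (T.ne_of_height_neg infty hv)
  rw [height_neg_iff] at hv
  have hp : T.parent v₀ v = v₀ ∨ ¬T.Below infty (T.parent v₀ v) v₀ := by
    by_contra! h
    exact hv (T.below_of_adj_of_isBase infty hbase h.2 h.1 hadj.symm hd.symm)
  rw [T.height_of_not_below infty hv]
  rcases hp with hp | hp
  · rw [hp, (T.height_eq_zero_iff infty).mpr rfl]
    rw [hp, dist_self] at hd
    omega
  · rw [T.height_of_not_below infty hp]
    omega

lemma height_of_adj_of_ne_parent {v w : V} (hv : T.height infty v₀ v < 0) (hw : T.G.Adj v w)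
    (hne : w ≠ T.parent v₀ v) : T.height infty v₀ w = T.height infty v₀ v - 1 := by
  have hv₀ := T.ne_of_height_neg infty hv
  have hd : T.G.dist v₀ w = T.G.dist v₀ v + 1 :=
    (T.isTree.dist_eq_dist_add_one_of_adj v₀ hw).resolve_left
      fun hd => hne (T.eq_parent hv₀ hw hd.symm)
  rw [height_neg_iff] at hv
  have hwb : ¬T.Below infty w v₀ := fun hwb => hv (T.below_of_adj infty hwb hw hd.symm)
  rw [T.height_of_not_below infty hv, T.height_of_not_below infty hwb, hd]
  push_cast
  ring

lemma eq_of_adj_of_height_eq_sub_one {z a b : V} (hz : 0 < T.height infty v₀ z)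
    (ha : T.G.Adj z a) (hb : T.G.Adj z b) (ha' : T.height infty v₀ a = T.height infty v₀ z - 1)
    (hb' : T.height infty v₀ b = T.height infty v₀ z - 1) : a = b := by
  have hd : ∀ u, T.height infty v₀ u = T.height infty v₀ z - 1 →
      T.G.dist v₀ u + 1 = T.G.dist v₀ z := fun u hu => by
    have := T.natAbs_height infty (v₀ := v₀) u
    have := T.natAbs_height infty (v₀ := v₀) z
    omega
  exact T.isTree.eq_of_adj_of_dist_add_one_eq ha hb (hd a ha') (hd b hb')

lemma finite_setOf_height_eq (j : ℤ) : {v | T.height infty v₀ v = j}.Finite :=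
  (T.isTree.connected.finite_setOf_dist_eq T.locFin v₀ j.natAbs).subset fun v hv => by
    rw [Set.mem_ofPred_eq] at hv ⊢
    rw [← hv, natAbs_height]

variable (v₀) in
noncomputable def level (j : ℕ) : Finset V :=
  (T.finite_setOf_height_eq infty (v₀ := v₀) (-j)).toFinset

@[simp]
lemma mem_level {j : ℕ} {v : V} : v ∈ T.level infty v₀ j ↔ T.height infty v₀ v = -j :=
  Set.Finite.mem_toFinset _

lemma level_zero : T.level infty v₀ 0 = {v₀} := by
  ext v
  simp [height_eq_zero_iff]

lemma adj_of_mem_level_one {v : V} (hv : v ∈ T.level infty v₀ 1) : T.G.Adj v₀ v := by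
  rw [mem_level] at hv
  rw [← dist_eq_one_iff_adj, ← T.natAbs_height infty, hv]
  rfl

lemma parent_mem_level (hbase : T.IsBase infty v₀) {j : ℕ} {x : V}
    (hx : x ∈ T.level infty v₀ (j + 1)) : T.parent v₀ x ∈ T.level infty v₀ j := by
  rw [mem_level] at hx ⊢
  rw [T.height_parent infty hbase (by omega), hx]
  push_cast
  ring

lemma exists_adj (hbase : T.IsBase infty v₀) (v : V) : ∃ w, T.G.Adj v w := by
  by_cases hv : v = v₀
  · subst hv
    have := hbase.1
    exact Set.nonempty_of_ncard_ne_zero (s := T.G.neighborSet v) (by omega)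
  · exact ⟨_, (T.parent_spec hv).1⟩

lemma two_le_card_level_one (hbase : T.IsBase infty v₀) : 2 ≤ (T.level infty v₀ 1).card := by
  classical
  have hval : 3 ≤ (T.locFin v₀).toFinset.card := by
    rw [← Set.ncard_eq_toFinset_card _ (T.locFin v₀)]
    exact hbase.1
  have hup : ((T.locFin v₀).toFinset.filter (T.Below infty · v₀)).card ≤ 1 := by
    refine Finset.card_le_one.mpr fun a ha b hb => ?_
    simp only [Finset.mem_filter, Set.Finite.mem_toFinset, mem_neighborSet] at ha hb
    exact T.eq_of_adj_of_below infty ha.1 hb.1 (by simp [ha.1]) (by simp [hb.1]) ha.2 hb.2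
  have hdown : (T.locFin v₀).toFinset.filter (¬T.Below infty · v₀) ⊆ T.level infty v₀ 1 := by
    intro w hw
    simp only [Finset.mem_filter, Set.Finite.mem_toFinset, mem_neighborSet] at hw
    rw [mem_level, T.height_of_not_below infty hw.2, dist_eq_one_iff_adj.mpr hw.1]
  have := Finset.card_filter_add_card_filter_not (s := (T.locFin v₀).toFinset) (T.Below infty · v₀)
  have := Finset.card_le_card hdown
  omega

variable {dV : V → ℕ} {dE : V → V → ℕ} {Dg N : ℕ}

lemma degree_eq_edgeDegree_parent (hdeg : T.IsLocalDeg dV dE) (hbase : T.IsBase infty v₀)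
    (hN : ∀ v : V, T.height infty v₀ (T.F v) = T.height infty v₀ v + (N : ℤ)) {v : V}
    (hv : T.height infty v₀ v < 0) : dV v = dE v (T.parent v₀ v) := by
  obtain ⟨-, -, -, -, hloc⟩ := hdeg
  have hadj := (T.parent_spec (T.ne_of_height_neg infty hv)).1
  have hfiber : {w | T.G.Adj v w ∧ T.F w = T.F (T.parent v₀ v)} = {T.parent v₀ v} := by
    refine Set.eq_singleton_iff_unique_mem.mpr ⟨⟨hadj, rfl⟩, fun w ⟨hw, hFw⟩ => ?_⟩
    by_contra hne
    have h₁ := T.height_of_adj_of_ne_parent infty hv hw hne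
    have h₂ := T.height_parent infty hbase hv
    have h₃ := hN w
    rw [hFw, hN] at h₃
    omega
  rw [hloc hadj, hfiber, finsum_mem_singleton]

lemma sum_edgeDegree_erase_parent_add_one_le [DecidableEq V] (hdeg : T.IsLocalDeg dV dE)
    (hbase : T.IsBase infty v₀)
    (hN : ∀ v : V, T.height infty v₀ (T.F v) = T.height infty v₀ v + (N : ℤ)) {v : V}
    (hv : T.height infty v₀ v < 0) :
    ∑ w ∈ (T.locFin v).toFinset.erase (T.parent v₀ v), (dE v w - 1) + 1 ≤ dV v := by
  have hpar := T.degree_eq_edgeDegree_parent infty hdeg hbase hN hv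
  obtain ⟨-, -, hdE, hRH, -⟩ := hdeg
  have hadj := (T.parent_spec (T.ne_of_height_neg infty hv)).1
  have hRHv := hRH v
  rw [finsum_mem_eq_finite_toFinset_sum _ (T.locFin v),
    ← Finset.add_sum_erase _ _ ((T.locFin v).mem_toFinset.mpr hadj)] at hRHv
  have := hdE hadj
  omega

lemma sum_degree_fiber (hdeg : T.IsLocalDeg dV dE) (hDg : T.IsGlobalDeg dE Dg) {w w' : V}
    (hadj : T.G.Adj w w') : ∑ a ∈ (T.finFibers w).toFinset, dV a = Dg := by
  obtain ⟨-, -, -, -, hloc⟩ := hdeg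
  rw [hDg hadj, finsum_mem_eq_finite_toFinset_sum _ (T.finFibers w)]
  refine Finset.sum_congr rfl fun a ha => ?_
  rw [Set.Finite.mem_toFinset, Set.mem_ofPred_eq] at ha
  obtain ⟨b, hb, hFb⟩ := T.edgeSurj (ha ▸ hadj : T.G.Adj (T.F a) w')
  rw [hloc hb, hFb]

lemma degree_le_globalDeg (hdeg : T.IsLocalDeg dV dE) (hDg : T.IsGlobalDeg dE Dg) {v w : V}
    (hadj : T.G.Adj v w) : dV v ≤ Dg := by
  rw [← T.sum_degree_fiber hdeg hDg (T.adjMap hadj)]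
  exact Finset.single_le_sum (fun _ _ => Nat.zero_le _) (by simp)

lemma degree_base_eq_sum (hdeg : T.IsLocalDeg dV dE) (hbase : T.IsBase infty v₀) (hN0 : 0 < N)
    (hN : ∀ v : V, T.height infty v₀ (T.F v) = T.height infty v₀ v + (N : ℤ)) :
    dV v₀ = ∑ w ∈ T.level infty v₀ 1, dE v₀ w := by
  obtain ⟨w₀, hw₀⟩ : (T.level infty v₀ 1).Nonempty :=
    Finset.card_pos.mp (by have := T.two_le_card_level_one infty hbase; omega)
  obtain ⟨-, -, -, -, hloc⟩ := hdeg
  have hFv₀ : T.height infty v₀ (T.F v₀) = N := by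
    rw [hN, (T.height_eq_zero_iff infty).mpr rfl, zero_add]
  have hadj₀ := T.adj_of_mem_level_one infty hw₀
  have hFw₀ := hN w₀
  rw [(mem_level _ _).mp hw₀] at hFw₀
  have hfiber : {w | T.G.Adj v₀ w ∧ T.F w = T.F w₀} = ↑(T.level infty v₀ 1) := by
    ext w
    have hFw := hN w
    simp only [Set.mem_ofPred_eq, Finset.mem_coe, mem_level]
    constructor
    · rintro ⟨-, hF⟩
      rw [hF] at hFw
      omega
    · intro hw
      refine ⟨T.adj_of_mem_level_one infty ((mem_level _ _).mpr hw), ?_⟩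
      exact T.eq_of_adj_of_height_eq_sub_one infty (v₀ := v₀) (z := T.F v₀) (by omega)
        (T.adjMap (T.adj_of_mem_level_one infty ((mem_level _ _).mpr hw))) (T.adjMap hadj₀)
        (by omega) (by omega)
  rw [hloc hadj₀, hfiber, finsum_mem_coe_finset]

lemma sum_degree_level_add (hdeg : T.IsLocalDeg dV dE) (hbase : T.IsBase infty v₀)
    (hDg : T.IsGlobalDeg dE Dg)
    (hN : ∀ v : V, T.height infty v₀ (T.F v) = T.height infty v₀ v + (N : ℤ)) (j : ℕ) :
    ∑ x ∈ T.level infty v₀ (j + N), dV x = Dg * (T.level infty v₀ j).card := by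
  classical
  have hmaps : ∀ x ∈ T.level infty v₀ (j + N), T.F x ∈ T.level infty v₀ j := fun x hx => by
    rw [mem_level] at hx ⊢
    rw [hN, hx]
    push_cast
    ring
  rw [← Finset.sum_fiberwise_of_maps_to hmaps, Finset.card_eq_sum_ones, Finset.mul_sum]
  refine Finset.sum_congr rfl fun w hw => ?_
  have hfiber : (T.level infty v₀ (j + N)).filter (T.F · = w) = (T.finFibers w).toFinset := by
    ext x
    simp only [Finset.mem_filter, Set.Finite.mem_toFinset, Set.mem_ofPred_eq, mem_level,
      and_iff_right_iff_imp]
    rintro rfl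
    rw [mem_level, hN] at hw
    push_cast
    omega
  obtain ⟨w', hw'⟩ := T.exists_adj infty hbase w
  rw [hfiber, T.sum_degree_fiber hdeg hDg hw', mul_one]

lemma card_level_add_sum_sub_one (hdeg : T.IsLocalDeg dV dE) (hbase : T.IsBase infty v₀)
    (hDg : T.IsGlobalDeg dE Dg)
    (hN : ∀ v : V, T.height infty v₀ (T.F v) = T.height infty v₀ v + (N : ℤ)) (j : ℕ) :
    (T.level infty v₀ (j + N)).card + ∑ x ∈ T.level infty v₀ (j + N), (dV x - 1) =
      Dg * (T.level infty v₀ j).card := by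
  rw [Finset.card_add_sum_sub_one fun x _ => hdeg.2.1 x,
    T.sum_degree_level_add infty hdeg hbase hDg hN]

lemma sum_level_succ_sub_one_le (hdeg : T.IsLocalDeg dV dE) (hbase : T.IsBase infty v₀)
    (hN : ∀ v : V, T.height infty v₀ (T.F v) = T.height infty v₀ v + (N : ℤ)) {j : ℕ}
    (hj : 1 ≤ j) :
    ∑ x ∈ T.level infty v₀ (j + 1), (dV x - 1) ≤ ∑ v ∈ T.level infty v₀ j, (dV v - 1) := by
  classical
  have hsymm := hdeg.1
  rw [← Finset.sum_fiberwise_of_maps_to fun x hx => T.parent_mem_level infty hbase hx]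
  refine Finset.sum_le_sum fun v hv => ?_
  rw [mem_level] at hv
  have hv' : T.height infty v₀ v < 0 := by omega
  calc ∑ x ∈ (T.level infty v₀ (j + 1)).filter (T.parent v₀ · = v), (dV x - 1)
      = ∑ x ∈ (T.level infty v₀ (j + 1)).filter (T.parent v₀ · = v), (dE v x - 1) := by
        refine Finset.sum_congr rfl fun x hx => ?_
        rw [Finset.mem_filter, mem_level] at hx
        rw [T.degree_eq_edgeDegree_parent infty hdeg hbase hN (by omega), hx.2, hsymm]
    _ ≤ ∑ x ∈ (T.locFin v).toFinset.erase (T.parent v₀ v), (dE v x - 1) := by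
        refine Finset.sum_le_sum_of_subset fun x hx => ?_
        rw [Finset.mem_filter, mem_level] at hx
        obtain ⟨hx, rfl⟩ := hx
        have hx₀ : x ≠ v₀ := T.ne_of_height_neg infty (by omega)
        refine Finset.mem_erase.mpr
          ⟨fun h => ?_, (T.locFin _).mem_toFinset.mpr (T.parent_spec hx₀).1.symm⟩
        have := T.height_parent infty hbase hv'
        rw [← h] at this
        omega
    _ ≤ dV v - 1 := by
        have := T.sum_edgeDegree_erase_parent_add_one_le infty hdeg hbase hN hv'
        omega

lemma sum_level_one_sub_one_add_two_le (hdeg : T.IsLocalDeg dV dE) (hbase : T.IsBase infty v₀)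
    (hDg : T.IsGlobalDeg dE Dg) (hN0 : 0 < N)
    (hN : ∀ v : V, T.height infty v₀ (T.F v) = T.height infty v₀ v + (N : ℤ)) :
    ∑ x ∈ T.level infty v₀ 1, (dV x - 1) + 2 ≤ Dg := by
  have hsum : ∑ x ∈ T.level infty v₀ 1, (dV x - 1) = ∑ x ∈ T.level infty v₀ 1, (dE v₀ x - 1) := by
    refine Finset.sum_congr rfl fun x hx => ?_
    have hp : T.parent v₀ x = v₀ := by
      simpa [level_zero] using T.parent_mem_level infty hbase (j := 0) hx
    rw [T.degree_eq_edgeDegree_parent infty hdeg hbase hN (by rw [mem_level] at hx; omega), hp,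
      hdeg.1]
  have hcard := Finset.card_add_sum_sub_one (s := T.level infty v₀ 1) (f := dE v₀)
    fun x hx => hdeg.2.2.1 (T.adj_of_mem_level_one infty hx)
  rw [← T.degree_base_eq_sum infty hdeg hbase hN0 hN] at hcard
  have := T.two_le_card_level_one infty hbase
  obtain ⟨w, hw⟩ := T.exists_adj infty hbase v₀
  have := T.degree_le_globalDeg hdeg hDg hw
  omega

lemma sum_level_sub_one_add_two_le (hdeg : T.IsLocalDeg dV dE) (hbase : T.IsBase infty v₀)
    (hDg : T.IsGlobalDeg dE Dg) (hN0 : 0 < N)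
    (hN : ∀ v : V, T.height infty v₀ (T.F v) = T.height infty v₀ v + (N : ℤ)) {j : ℕ}
    (hj : 1 ≤ j) : ∑ x ∈ T.level infty v₀ j, (dV x - 1) + 2 ≤ Dg := by
  induction j, hj using Nat.le_induction with
  | base => exact T.sum_level_one_sub_one_add_two_le infty hdeg hbase hDg hN0 hN
  | succ j hj ih =>
    exact (Nat.add_le_add_right (T.sum_level_succ_sub_one_le infty hdeg hbase hN hj) 2).trans ih


lemma card_level_add_le_mul (hdeg : T.IsLocalDeg dV dE) (hbase : T.IsBase infty v₀)
    (hDg : T.IsGlobalDeg dE Dg)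
    (hN : ∀ v : V, T.height infty v₀ (T.F v) = T.height infty v₀ v + (N : ℤ)) (j : ℕ) :
    (T.level infty v₀ (j + N)).card ≤ Dg * (T.level infty v₀ j).card :=
  (Nat.le_add_right _ _).trans (T.card_level_add_sum_sub_one infty hdeg hbase hDg hN j).le

lemma mul_card_level_add_two_le (hdeg : T.IsLocalDeg dV dE) (hbase : T.IsBase infty v₀)
    (hDg : T.IsGlobalDeg dE Dg) (hN0 : 0 < N)
    (hN : ∀ v : V, T.height infty v₀ (T.F v) = T.height infty v₀ v + (N : ℤ)) (j : ℕ) :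
    Dg * (T.level infty v₀ j).card + 2 ≤ (T.level infty v₀ (j + N)).card + Dg := by
  have := T.card_level_add_sum_sub_one infty hdeg hbase hDg hN j
  have := T.sum_level_sub_one_add_two_le infty hdeg hbase hDg hN0 hN (j := j + N) (by omega)
  omega

end TreeDyn

theorem vertex_count_bounds_general
    {V : Type} (T : TreeDyn V) (infty : T.G.end)
    (dV : V → ℕ) (dE : V → V → ℕ) (hdeg : T.IsLocalDeg dV dE)
    (v₀ : V) (hbase : T.IsBase infty v₀)
    (Dg : ℕ) (hDg : T.IsGlobalDeg dE Dg)
    (N : ℕ) (hN0 : 0 < N)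
    (hN : ∀ v : V, T.height infty v₀ (T.F v) = T.height infty v₀ v + (N : ℤ))
    (k : ℕ) (hk : 1 ≤ k) :
    ({v : V | T.height infty v₀ v = -((k * N : ℕ) : ℤ)}.ncard ≤ Dg ^ k) ∧
    (2 + ∑ i ∈ Finset.Ico 1 k, Dg ^ i ≤
      {v : V | T.height infty v₀ v = -((k * N : ℕ) : ℤ)}.ncard) ∧
    ((Dg : ℚ) ^ k / ((Dg : ℚ) - 1) ≤ 2 + ∑ i ∈ Finset.Ico 1 k, (Dg : ℚ) ^ i) := by
  have hcard : {v : V | T.height infty v₀ v = -((k * N : ℕ) : ℤ)}.ncard =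
      (T.level infty v₀ (k * N)).card := by
    rw [← Set.ncard_coe_finset]
    congr
    ext
    simp
  have h0 : (T.level infty v₀ (0 * N)).card = 1 := by simp [TreeDyn.level_zero]
  have hDg2 : 2 ≤ Dg := by
    have := T.sum_level_one_sub_one_add_two_le infty hdeg hbase hDg hN0 hN
    omega
  rw [hcard]
  refine ⟨le_pow_of_forall_le_mul (a := fun k => (T.level infty v₀ (k * N)).card) h0.le
      (fun k => ?_) k,
    two_add_sum_Ico_pow_le (a := fun k => (T.level infty v₀ (k * N)).card) h0.ge (fun k => ?_) hk,
    pow_div_sub_one_le_two_add_sum_Ico (by exact_mod_cast hDg2) hk⟩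
  · simpa only [add_one_mul] using T.card_level_add_le_mul infty hdeg hbase hDg hN (k * N)
  · simpa only [add_one_mul] using
      T.mul_card_level_add_two_le infty hdeg hbase hDg hN0 hN (k * N)

/-- **Vertex counts at each level.**
Let `F : T → T` be a polynomial-like branched covering with global degree
`Dg = deg F`, base `v₀`, and let `N` be the positive integer with
`h(F v) = h(v) + N`.  Let `V_k = {v : h(v) = −k·N}`.  Then for every `k ≥ 1`:
`Dg^k ≥ |V_k| ≥ 2 + Dg + Dg² + ⋯ + Dg^{k−1} ≥ Dg^k/(Dg − 1)`. -/
theorem vertex_count_bounds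
    {V : Type} (T : TreeDyn V) (infty : T.G.end)
    (hpl : T.IsPolyLike infty)
    (dV : V → ℕ) (dE : V → V → ℕ) (hdeg : T.IsLocalDeg dV dE)
    (v₀ : V) (hbase : T.IsBase infty v₀)
    (Dg : ℕ) (hDg : T.IsGlobalDeg dE Dg)
    (N : ℕ) (hN0 : 0 < N)
    (hN : ∀ v : V, T.height infty v₀ (T.F v) = T.height infty v₀ v + (N : ℤ))
    (k : ℕ) (hk : 1 ≤ k) :
    ({v : V | T.height infty v₀ v = -((k * N : ℕ) : ℤ)}.ncard ≤ Dg ^ k) ∧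
    (2 + ∑ i ∈ Finset.Ico 1 k, Dg ^ i ≤
      {v : V | T.height infty v₀ v = -((k * N : ℕ) : ℤ)}.ncard) ∧
    ((Dg : ℚ) ^ k / ((Dg : ℚ) - 1) ≤ 2 + ∑ i ∈ Finset.Ico 1 k, (Dg : ℚ) ^ i) :=
  vertex_count_bounds_general T infty dV dE hdeg v₀ hbase Dg hDg N hN0 hN k hk
end

section
/- Let F : T₁ → T₂ be a branched covering between simplicial trees. Then F extends continuously to a map T₁ ∪ ∂T₁ → T₂ ∪ ∂T₂, and the induced map on ends F : ∂T₁ → ∂T₂ is open and surjective. -/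
open SimpleGraph Function Opposite

/-!
A finite set `K ⊆ V₂` pulls back under the finite-fibred map `φ` to a finite set `φ⁻¹ K`, and `φ`
sends each component of `G₁ ∖ φ⁻¹ K` into a component of `G₂ ∖ K`. So an end `e` of `G₁` goes to
the end whose `K`-component is the image of the `φ⁻¹ K`-component of `e`; this is continuous because
each coordinate of the image depends on a single coordinate of `e`.

Since edges lift, walks lift, and each component of `G₁ ∖ φ⁻¹ K` maps onto a component of `G₂ ∖ K`.
Given an end `f` of `G₂` and `S ⊆ V₁` such that, for every `K`, infinitely many vertices of `S` are
sent into the `K`-component of `f`, König's lemma applied to the components of `G₁ ∖ L` that keep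
this property yields an end of `G₁` over `f` all of whose components meet `S`. Taking `S = V₁` gives
surjectivity. Taking for `S` the `φ⁻¹ K`-component of an end `e`, it shows that every end agreeing
with the image of `e` at `K` has a preimage agreeing with `e` at `φ⁻¹ K`, hence openness.
-/

open CategoryTheory Filter Topology

namespace SimpleGraph

variable {V : Type} {G : SimpleGraph V}

theorem ComponentCompl.eq_of_mem_of_mem {K : Set V} {C D : G.ComponentCompl K} {v : V}
    (hC : v ∈ C) (hD : v ∈ D) : C = D :=
  hC.choose_spec.symm.trans hD.choose_spec

theorem end_val_supp_antitone (e : G.end) : Antitone fun K : Finset V => (e.val (op K)).supp := by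
  intro K L h
  have hK : (e.val (op L)).hom (Finset.coe_subset.mpr h) = e.val (op K) := e.prop (opHomOfLE h)
  show (e.val (op L)).supp ⊆ (e.val (op K)).supp
  rw [← hK]
  exact ComponentCompl.subset_hom _ _

theorem end_val_eq_of_subset {e e' : G.end} {K L : Finset V} (h : K ⊆ L)
    (he : e.val (op L) = e'.val (op L)) : e.val (op K) = e'.val (op K) := by
  rw [← e.prop (opHomOfLE h), ← e'.prop (opHomOfLE h), he]

section LocallyFinite

variable [G.LocallyFinite] [Fact G.Preconnected] {ι : Type*} [Preorder ι] [IsDirectedOrder ι]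
  [Nonempty ι] {A : ι → Set V}

theorem exists_componentCompl_forall_infinite_inter (hA : Antitone A) (hinf : ∀ i, (A i).Infinite)
    (L : Finset V) : ∃ D : G.ComponentCompl L, ∀ i, ((D : Set V) ∩ A i).Infinite := by
  by_contra! h
  have : ∀ᶠ i in atTop, ∀ D : G.ComponentCompl L, ((D : Set V) ∩ A i).Finite :=
    eventually_all.mpr fun D =>
      have ⟨i, hi⟩ := h D
      eventually_atTop.mpr ⟨i, fun j hj => hi.subset (Set.inter_subset_inter_right _ (hA hj))⟩
  obtain ⟨i, hi⟩ := this.exists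
  refine hinf i ((L.finite_toSet.union (Set.finite_iUnion hi)).subset fun v hv => ?_)
  by_cases hvL : v ∈ (L : Set V)
  · exact Or.inl hvL
  · exact Or.inr (Set.mem_iUnion.mpr ⟨G.componentComplMk hvL, G.componentComplMk_mem hvL, hv⟩)

theorem exists_end_forall_infinite_inter (hA : Antitone A) (hinf : ∀ i, (A i).Infinite) :
    ∃ e : G.end, ∀ L i, ((e.val L).supp ∩ A i).Infinite := by
  let P : Subfunctor G.componentComplFunctor :=
    { obj := fun L => {D | ∀ i, (D.supp ∩ A i).Infinite}
      map := fun f D hD i =>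
        (hD i).mono (Set.inter_subset_inter_left _ (D.subset_hom (le_of_op_hom f))) }
  have (L : (Finset V)ᵒᵖ) : Finite (P.toFunctor.obj L) := Subtype.finite
  have (L : (Finset V)ᵒᵖ) : Nonempty (P.toFunctor.obj L) :=
    have ⟨D, hD⟩ := exists_componentCompl_forall_infinite_inter hA hinf L.unop
    ⟨⟨D, hD⟩⟩
  obtain ⟨s, hs⟩ := nonempty_sections_of_finite_inverse_system P.toFunctor
  exact ⟨⟨fun L => (s L).1, fun f => congrArg Subtype.val (hs f)⟩, fun L => (s L).2⟩

end LocallyFinite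

-- With these instances the subspace topology of `G.end` in the product is `endTop G` by `rfl`.
abbrev componentComplTopology (G : SimpleGraph V) (K : (Finset V)ᵒᵖ) :
    TopologicalSpace (G.componentComplFunctor.obj K) :=
  ⊥

attribute [local instance] componentComplTopology

theorem discreteTopology_componentCompl (G : SimpleGraph V) (K : (Finset V)ᵒᵖ) :
    DiscreteTopology (G.componentComplFunctor.obj K) :=
  ⟨rfl⟩

attribute [local instance] discreteTopology_componentCompl

theorem continuous_end_val (K : (Finset V)ᵒᵖ) : Continuous fun e : G.end => e.val K :=
  (continuous_apply K).comp continuous_subtype_val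

theorem isOpen_setOf_end_val_eq {K : (Finset V)ᵒᵖ} (C : G.componentComplFunctor.obj K) :
    IsOpen {e : G.end | e.val K = C} :=
  (isOpen_discrete {C}).preimage (continuous_end_val K)

theorem nhds_basis_setOf_end_val_eq (e : G.end) :
    (𝓝 e).HasBasis (fun _ : Finset V => True) fun L => {e' | e'.val (op L) = e.val (op L)} := by
  classical
  refine ⟨fun U => ⟨fun hU => ?_, fun ⟨L, _, hL⟩ =>
    mem_of_superset ((isOpen_setOf_end_val_eq _).mem_nhds rfl) hL⟩⟩
  rw [nhds_subtype, mem_comap] at hU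
  obtain ⟨W, hW, hWU⟩ := hU
  rw [nhds_pi, mem_pi'] at hW
  obtain ⟨I, t, ht, hIt⟩ := hW
  refine ⟨I.sup unop, trivial, fun e' he' => hWU (hIt fun i hi => ?_)⟩
  rw [end_val_eq_of_subset (Finset.le_sup hi) he']
  exact mem_of_mem_nhds (ht i)

namespace Hom

variable {V₁ V₂ : Type} {G₁ : SimpleGraph V₁} {G₂ : SimpleGraph V₂}

section LocallySurjective

variable (φ : G₁ →g G₂)

def IsLocallySurjective : Prop :=
  ∀ ⦃v : V₁⦄ ⦃w' : V₂⦄, G₂.Adj (φ v) w' → ∃ w : V₁, G₁.Adj v w ∧ φ w = w'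

variable {φ}

theorem IsLocallySurjective.exists_reachable_lift (hφ : φ.IsLocallySurjective) {v : V₁} {w : V₂}
    (h : G₂.Reachable (φ v) w) : ∃ u, G₁.Reachable v u ∧ φ u = w := by
  obtain ⟨p⟩ := h
  generalize hv : φ v = x at p
  induction p generalizing v with
  | nil => exact ⟨v, .rfl, hv⟩
  | cons hxy _ ih =>
    obtain ⟨u, hvu, rfl⟩ := hφ (hv ▸ hxy)
    obtain ⟨u', hu', rfl⟩ := ih rfl
    exact ⟨u', hvu.reachable.trans hu', rfl⟩

theorem IsLocallySurjective.surjective (hφ : φ.IsLocallySurjective) (hG₂ : G₂.Preconnected)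
    [Nonempty V₁] : Surjective φ := fun w =>
  have ⟨v⟩ := ‹Nonempty V₁›
  (hφ.exists_reachable_lift (hG₂ (φ v) w)).imp fun _ => And.right

theorem IsLocallySurjective.induceHom (hφ : φ.IsLocallySurjective) {s : Set V₁} {t : Set V₂}
    (hst : Set.MapsTo φ s t) (hts : φ ⁻¹' t ⊆ s) : (induceHom φ hst).IsLocallySurjective := by
  rintro v ⟨w', hw'⟩ hadj
  obtain ⟨w, hvw, rfl⟩ := hφ (show G₂.Adj (φ v) w' from hadj)
  exact ⟨⟨w, hts hw'⟩, hvw, rfl⟩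

end LocallySurjective

variable (φ : G₁ →g G₂) (hfin : ∀ w : V₂, {v : V₁ | φ v = w}.Finite)

noncomputable def finsetPreimage (K : Finset V₂) : Finset V₁ :=
  (K.finite_toSet.preimage' fun w _ => hfin w).toFinset

variable {φ hfin}

@[simp]
theorem mem_finsetPreimage {K : Finset V₂} {v : V₁} : v ∈ φ.finsetPreimage hfin K ↔ φ v ∈ K := by
  simp [finsetPreimage]

theorem finsetPreimage_mono {K L : Finset V₂} (h : K ⊆ L) :
    φ.finsetPreimage hfin K ⊆ φ.finsetPreimage hfin L := fun v hv => by
  simpa using h (mem_finsetPreimage.mp hv)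

theorem compl_coe_finsetPreimage (K : Finset V₂) :
    (φ.finsetPreimage hfin K : Set V₁)ᶜ = φ ⁻¹' (K : Set V₂)ᶜ := by
  ext v
  simp

theorem mapsTo_compl_finsetPreimage (K : Finset V₂) :
    Set.MapsTo φ (φ.finsetPreimage hfin K : Set V₁)ᶜ (K : Set V₂)ᶜ :=
  compl_coe_finsetPreimage K ▸ Set.mapsTo_preimage φ _

variable (φ hfin)

noncomputable def componentComplMap (K : Finset V₂) :
    G₁.ComponentCompl (φ.finsetPreimage hfin K : Set V₁) → G₂.ComponentCompl (K : Set V₂) :=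
  ConnectedComponent.map (induceHom φ (mapsTo_compl_finsetPreimage K))

variable {φ hfin}

theorem componentComplMap_mk {K : Finset V₂} {v : V₁}
    (hv : v ∉ (φ.finsetPreimage hfin K : Set V₁)) :
    φ.componentComplMap hfin K (G₁.componentComplMk hv) =
      G₂.componentComplMk (mapsTo_compl_finsetPreimage K hv) :=
  rfl

theorem componentComplMap_hom {K L : Finset V₂} (h : K ⊆ L)
    (C : G₁.ComponentCompl (φ.finsetPreimage hfin L : Set V₁)) :
    φ.componentComplMap hfin K (C.hom (Finset.coe_subset.mpr (finsetPreimage_mono h))) =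
      (φ.componentComplMap hfin L C).hom (Finset.coe_subset.mpr h) :=
  C.ind fun _ _ => rfl

theorem mem_componentComplMap {K : Finset V₂}
    {C : G₁.ComponentCompl (φ.finsetPreimage hfin K : Set V₁)} {v : V₁} (hv : v ∈ C) :
    φ v ∈ φ.componentComplMap hfin K C := by
  obtain ⟨hv, rfl⟩ := hv
  exact ⟨_, rfl⟩

theorem IsLocallySurjective.coe_componentComplMap (hφ : φ.IsLocallySurjective) {K : Finset V₂}
    (C : G₁.ComponentCompl (φ.finsetPreimage hfin K : Set V₁)) :
    (φ.componentComplMap hfin K C : Set V₂) = φ '' C := by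
  refine Set.Subset.antisymm ?_ (Set.image_subset_iff.mpr fun _ => mem_componentComplMap)
  refine C.ind fun v hv => ?_
  rintro w ⟨hw, hvw⟩
  have hlift := hφ.induceHom (mapsTo_compl_finsetPreimage K)
    (compl_coe_finsetPreimage (hfin := hfin) K).superset
  obtain ⟨u, hvu, hu⟩ := hlift.exists_reachable_lift (ConnectedComponent.eq.mp hvw.symm)
  exact ⟨u, ⟨u.2, (ConnectedComponent.eq.mpr hvu).symm⟩, congrArg Subtype.val hu⟩

variable (φ hfin)

noncomputable def endMap (e : G₁.end) : G₂.end :=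
  ⟨fun K => φ.componentComplMap hfin K.unop (e.val (op (φ.finsetPreimage hfin K.unop))),
    fun {K L} f => by
      have hLK : L.unop ⊆ K.unop := le_of_op_hom f
      exact (componentComplMap_hom hLK _).symm.trans
        (congrArg _ (e.prop (opHomOfLE (finsetPreimage_mono (hfin := hfin) hLK))))⟩

variable {φ hfin}

theorem exists_endMap_eq [G₁.LocallyFinite] [Fact G₁.Preconnected] {S : Set V₁} {f : G₂.end}
    (hS : ∀ K : Finset V₂, (S ∩ φ ⁻¹' (f.val (op K)).supp).Infinite) :
    ∃ e : G₁.end, φ.endMap hfin e = f ∧ ∀ L, ((e.val L).supp ∩ S).Nonempty := by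
  have hA : Antitone fun K : Finset V₂ => S ∩ φ ⁻¹' (f.val (op K)).supp := fun _ _ h =>
    Set.inter_subset_inter_right _ (Set.preimage_mono (end_val_supp_antitone f h))
  obtain ⟨e, he⟩ := exists_end_forall_infinite_inter (G := G₁) hA hS
  refine ⟨e, Subtype.ext (funext fun K => ?_), fun L =>
    (he L ∅).nonempty.mono (Set.inter_subset_inter_right _ Set.inter_subset_left)⟩
  obtain ⟨v, hvC, -, hvf⟩ := (he (op (φ.finsetPreimage hfin K.unop)) K.unop).nonempty
  exact ComponentCompl.eq_of_mem_of_mem (mem_componentComplMap hvC) hvf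

theorem IsLocallySurjective.surjective_endMap [G₁.LocallyFinite] [Fact G₁.Preconnected]
    [Nonempty V₁] (hφ : φ.IsLocallySurjective) (hG₂ : G₂.Preconnected) :
    Surjective (φ.endMap hfin) := fun f =>
  have hS (K : Finset V₂) : (Set.univ ∩ φ ⁻¹' (f.val (op K)).supp).Infinite := by
    rw [Set.univ_inter]
    exact (G₂.end_componentCompl_infinite f (op K)).preimage
      ((hφ.surjective hG₂).range_eq ▸ Set.subset_univ _)
  (exists_endMap_eq hS).imp fun _ => And.left

theorem IsLocallySurjective.setOf_end_val_eq_subset_image_endMap [G₁.LocallyFinite]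
    [Fact G₁.Preconnected] (hφ : φ.IsLocallySurjective) (e : G₁.end) (K₀ : Finset V₂) :
    {f : G₂.end | f.val (op K₀) = (φ.endMap hfin e).val (op K₀)} ⊆
      φ.endMap hfin '' {e' | e'.val (op (φ.finsetPreimage hfin K₀)) =
        e.val (op (φ.finsetPreimage hfin K₀))} := by
  classical
  intro f hf
  set C₀ : G₁.ComponentCompl (φ.finsetPreimage hfin K₀ : Set V₁) :=
    e.val (op (φ.finsetPreimage hfin K₀))
  have hfC₀ : (f.val (op K₀)).supp = φ '' C₀ := by
    rw [show f.val (op K₀) = _ from hf]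
    exact hφ.coe_componentComplMap C₀
  have hS (K : Finset V₂) : ((C₀ : Set V₁) ∩ φ ⁻¹' (f.val (op K)).supp).Infinite := by
    refine Set.Infinite.of_image φ ((G₂.end_componentCompl_infinite f (op (K ∪ K₀))).mono ?_)
    intro w hw
    have hwK₀ : w ∈ (f.val (op K₀)).supp := end_val_supp_antitone f Finset.subset_union_right hw
    obtain ⟨u, hu, rfl⟩ := hfC₀ ▸ hwK₀
    exact ⟨u, ⟨hu, end_val_supp_antitone f Finset.subset_union_left hw⟩, rfl⟩
  obtain ⟨e', he', hne⟩ := exists_endMap_eq hS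
  obtain ⟨v, hv', hv⟩ := hne (op (φ.finsetPreimage hfin K₀))
  exact ⟨e', ComponentCompl.eq_of_mem_of_mem hv' hv, he'⟩

theorem continuous_endMap : Continuous (φ.endMap hfin) :=
  continuous_induced_rng.mpr <| continuous_pi fun _ =>
    continuous_of_discreteTopology.comp (continuous_end_val _)

theorem IsLocallySurjective.isOpenMap_endMap [G₁.LocallyFinite] [Fact G₁.Preconnected]
    (hφ : φ.IsLocallySurjective) : IsOpenMap (φ.endMap hfin) := by
  classical
  refine IsOpenMap.of_nhds_le fun e =>
    ((nhds_basis_setOf_end_val_eq _).le_basis_iff ((nhds_basis_setOf_end_val_eq e).map _)).mpr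
      fun L _ => ⟨L.image φ, trivial, (hφ.setOf_end_val_eq_subset_image_endMap e _).trans
        (Set.image_mono fun e' he' => end_val_eq_of_subset ?_ he')⟩
  intro v hv
  simpa using Finset.mem_image_of_mem φ hv

end Hom

end SimpleGraph

theorem branched_covering_extends_to_ends_general
    {V₁ V₂ : Type} (G₁ : SimpleGraph V₁) (G₂ : SimpleGraph V₂)
    (h₁ : G₁.IsTree) (h₂ : G₂.IsTree)
    (hlf₁ : ∀ v : V₁, (G₁.neighborSet v).Finite)
    (F : V₁ → V₂)
    (hadj : ∀ ⦃v w : V₁⦄, G₁.Adj v w → G₂.Adj (F v) (F w))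
    (hsurj : ∀ ⦃v : V₁⦄ ⦃w' : V₂⦄, G₂.Adj (F v) w' → ∃ w : V₁, G₁.Adj v w ∧ F w = w')
    (hfib : ∀ v' : V₂, {v : V₁ | F v = v'}.Finite) :
    ∃ Fb : G₁.end → G₂.end,
      (∀ (e : G₁.end) (K : Finset V₂), ∃ K' : Finset V₁,
        ∀ (v : V₁) (hv : v ∉ (K' : Set V₁)),
          G₁.componentComplMk hv = e.val (op K') →
          ∃ hFv : F v ∉ (K : Set V₂),
            G₂.componentComplMk hFv = (Fb e).val (op K)) ∧
      @Continuous _ _ (endTop G₁) (endTop G₂) Fb ∧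
      @IsOpenMap _ _ (endTop G₁) (endTop G₂) Fb ∧
      Surjective Fb := by
  let φ : G₁ →g G₂ := ⟨F, @hadj⟩
  have hφ : φ.IsLocallySurjective := hsurj
  have : G₁.LocallyFinite := fun v => (hlf₁ v).fintype
  have : Fact G₁.Preconnected := ⟨h₁.connected.preconnected⟩
  have : Nonempty V₁ := h₁.connected.nonempty
  refine ⟨φ.endMap hfib, fun e K => ⟨φ.finsetPreimage hfib K, fun v hv hmk =>
      ⟨Hom.mapsTo_compl_finsetPreimage K hv, ?_⟩⟩,
    Hom.continuous_endMap, hφ.isOpenMap_endMap, hφ.surjective_endMap h₂.connected.preconnected⟩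
  exact (Hom.componentComplMap_mk hv).symm.trans (congrArg _ hmk)

/-- **Branched coverings extend to the ends.**
Let `F : T₁ → T₂` be a branched covering between locally finite simplicial
trees: a simplicial map such that for every vertex `v`, the induced map on
edges adjacent to `v` surjects onto the edges adjacent to `F v`, and every
vertex has finitely many preimages.  Then `F` extends continuously to the
end compactifications: there is an induced map `Fb : ∂T₁ → ∂T₂`, compatible
with `F` (the `F`-image of the direction of an end `e` towards any finite set
`K` eventually lies in the direction of `Fb e`), which is continuous, open
and surjective. -/
theorem branched_covering_extends_to_ends
    {V₁ V₂ : Type} (G₁ : SimpleGraph V₁) (G₂ : SimpleGraph V₂)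
    (h₁ : G₁.IsTree) (h₂ : G₂.IsTree)
    (hlf₁ : ∀ v : V₁, (G₁.neighborSet v).Finite)
    (hlf₂ : ∀ v : V₂, (G₂.neighborSet v).Finite)
    (F : V₁ → V₂)
    (hadj : ∀ ⦃v w : V₁⦄, G₁.Adj v w → G₂.Adj (F v) (F w))
    (hsurj : ∀ ⦃v : V₁⦄ ⦃w' : V₂⦄, G₂.Adj (F v) w' → ∃ w : V₁, G₁.Adj v w ∧ F w = w')
    (hfib : ∀ v' : V₂, {v : V₁ | F v = v'}.Finite) :
    ∃ Fb : G₁.end → G₂.end,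
      (∀ (e : G₁.end) (K : Finset V₂), ∃ K' : Finset V₁,
        ∀ (v : V₁) (hv : v ∉ (K' : Set V₁)),
          G₁.componentComplMk hv = e.val (op K') →
          ∃ hFv : F v ∉ (K : Set V₂),
            G₂.componentComplMk hFv = (Fb e).val (op K)) ∧
      @Continuous _ _ (endTop G₁) (endTop G₂) Fb ∧
      @IsOpenMap _ _ (endTop G₁) (endTop G₂) Fb ∧
      Surjective Fb :=
  branched_covering_extends_to_ends_general G₁ G₂ h₁ h₂ hlf₁ F hadj hsurj hfib
end

section
/- Let F : T → T be a polynomial-like branched covering of a simplicial tree. Then the Julia set J(F) = ∂T ∖ {∞}, with the subspace topology from the space of ends ∂T, is nonempty, compact, perfect, and totally disconnected (hence homeomorphic to a Cantor set). -/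
open SimpleGraph Function Opposite

/-- The Julia set of `T`: the set of ends other than `infty`. -/
def JSet {V : Type} (T : TreeDyn V) (infty : T.G.end) : Type :=
  {p : T.G.end // p ≠ infty}

/-- The topology on the Julia set, induced from the topology on ends. -/
noncomputable def JTop {V : Type} (T : TreeDyn V) (infty : T.G.end) :
    TopologicalSpace (JSet T infty) :=
  TopologicalSpace.induced Subtype.val (endTop T.G)

/-- The Borel σ-algebra on the Julia set. -/
noncomputable def JBorel {V : Type} (T : TreeDyn V) (infty : T.G.end) :
    MeasurableSpace (JSet T infty) :=
  @borel (JSet T infty) (JTop T infty)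


/-!
The space of ends is the inverse limit of the finite discrete sets of components of complements
of finite sets, hence compact, Hausdorff and totally disconnected. Removing the isolated end
`infty` keeps it compact, and since `infty` is the only isolated end, no point of the Julia set
is isolated. For nonemptiness, a vertex `w` of valence at least three has two neighbours lying in
different components of `T ∖ {w}`; one of them misses `infty`, it is infinite because a tree
without leaves has no finite branches, and by König's lemma some end runs through it.
-/

open CategoryTheory Topology

namespace SimpleGraph

variable {V : Type} {G : SimpleGraph V}

theorem exists_end_eq_of_infinite [G.LocallyFinite] [Fact G.Preconnected] {K : Finset V}
    (C : G.ComponentCompl K) (hC : C.supp.Infinite) : ∃ e : G.end, e.val (op K) = C := by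
  -- König's lemma for the restriction of the inverse system to its eventual ranges
  have : Infinite V := @Infinite.of_injective _ _ hC.to_subtype _ Subtype.val_injective
  have hML : G.componentComplFunctor.IsMittagLeffler :=
    Functor.isMittagLeffler_of_exists_finite_range _ fun K => ⟨K, 𝟙 K, Set.finite_range _⟩
  have := Functor.toEventualRanges_nonempty _ hML
  obtain ⟨s, hs⟩ := Functor.eval_section_surjective_of_surjective _
    (Functor.surjective_toEventualRanges _ hML) (op K)
    ⟨C, (G.infinite_iff_in_eventualRange C).mp hC⟩
  exact ⟨Functor.toEventualRangesSectionsEquiv _ s, congrArg Subtype.val hs⟩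

theorem Connected.one_lt_ncard_neighborSet [G.LocallyFinite] (hG : G.Connected) {x y : V}
    (hxy : x ≠ y) (hx : (G.neighborSet x).ncard ≠ 1) : 1 < (G.neighborSet x).ncard := by
  obtain ⟨p⟩ := hG.preconnected x y
  have hpos : 0 < (G.neighborSet x).ncard :=
    (Set.ncard_pos (Set.toFinite _)).mpr ⟨_, p.adj_snd (Walk.not_nil_of_ne hxy)⟩
  omega

theorem IsTree.eq_of_adj_of_dist_eq_add_one (hG : G.IsTree) {u x y z : V}
    (hy : G.Adj x y) (hz : G.Adj x z)
    (hdy : G.dist u x = G.dist u y + 1) (hdz : G.dist u x = G.dist u z + 1) : y = z := by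
  classical
  obtain ⟨p, hp, -⟩ := (hG.connected u x).exists_path_of_dist
  have eq_penultimate : ∀ y, G.Adj x y → G.dist u x = G.dist u y + 1 → y = p.penultimate := by
    intro y hy hdy
    obtain ⟨q, hq, hql⟩ := (hG.connected u y).exists_path_of_dist
    have hxq : x ∉ q.support := fun hx => by
      have := (dist_le (q.takeUntil x hx)).trans (q.length_takeUntil_le_length hx)
      omega
    exact hG.isAcyclic.eq_penultimate_of_adj_end hp hy
      (hG.isAcyclic.mem_support_of_ne_mem_support_of_adj_of_isPath hp hq hy hxq)
  rw [eq_penultimate y hy hdy, eq_penultimate z hz hdz]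

theorem IsAcyclic.componentComplMk_ne_of_adj (hG : G.IsAcyclic) {K : Set V} {w n₁ n₂ : V}
    (hw : w ∈ K) (h₁ : G.Adj w n₁) (h₂ : G.Adj w n₂) (hne : n₁ ≠ n₂)
    (hn₁ : n₁ ∉ K) (hn₂ : n₂ ∉ K) : G.componentComplMk hn₁ ≠ G.componentComplMk hn₂ := by
  intro heq
  -- the edge `w n₂` is a bridge, but `w n₁` followed by a walk outside `K` avoids it
  obtain ⟨p⟩ := ConnectedComponent.exact heq
  have hwp : w ∉ (p.map (Embedding.induce Kᶜ).toHom).support := by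
    rw [Walk.support_map, List.mem_map]
    rintro ⟨v, -, rfl⟩
    exact v.2 hw
  have hbridge : s(w, n₂) ∈ (Walk.cons h₁ (p.map (Embedding.induce Kᶜ).toHom)).edges :=
    isBridge_iff_forall_walk_mem_edges.mp (isAcyclic_iff_forall_adj_isBridge.mp hG h₂) _
  rcases List.mem_cons.mp hbridge with h | h
  · exact hne (Sym2.congr_right.mp h.symm)
  · exact hwp (Walk.fst_mem_support_of_mem_edges _ h)

theorem IsTree.infinite_componentCompl_singleton [G.LocallyFinite] (hG : G.IsTree)
    (hval : ∀ v, (G.neighborSet v).ncard ≠ 1) {w : V}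
    (C : G.ComponentCompl (({w} : Finset V) : Set V)) : C.supp.Infinite := by
  intro hCfin
  obtain ⟨x, hxC, hmax⟩ := Set.exists_max_image _ (G.dist w) hCfin C.nonempty
  have hxw : x ≠ w := by simpa using C.notMem_of_mem hxC
  have hcloser : ∀ y, G.Adj x y → G.dist w x = G.dist w y + 1 := by
    intro y hxy
    rcases hG.dist_eq_dist_add_one_of_adj w hxy with h | h
    · exact h
    · by_cases hyw : y = w
      · simp [hyw] at h
      · have := hmax y (C.mem_of_adj x y hxC (by simpa using hyw) hxy)
        omega
  obtain ⟨y, z, hy, hz, hyz⟩ := (Set.one_lt_ncard_iff (Set.toFinite _)).mp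
    (hG.connected.one_lt_ncard_neighborSet hxw (hval x))
  exact hyz (hG.eq_of_adj_of_dist_eq_add_one hy hz (hcloser y hy) (hcloser z hz))

theorem IsTree.exists_end_ne [G.LocallyFinite] (hG : G.IsTree)
    (hval : ∀ v, (G.neighborSet v).ncard ≠ 1) {w : V} (hw : 1 < (G.neighborSet w).ncard)
    (e : G.end) : ∃ e' : G.end, e' ≠ e := by
  have : Fact G.Preconnected := ⟨hG.connected.preconnected⟩
  obtain ⟨n₁, n₂, h₁, h₂, hne⟩ := (Set.one_lt_ncard_iff (Set.toFinite _)).mp hw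
  have hn : ∀ {n}, G.Adj w n → n ∉ (({w} : Finset V) : Set V) := fun h => by simpa using h.ne'
  obtain ⟨C, hC⟩ : ∃ C : G.ComponentCompl (({w} : Finset V) : Set V), C ≠ e.val (op {w}) := by
    by_contra! h
    exact hG.isAcyclic.componentComplMk_ne_of_adj (by simp) h₁ h₂ hne (hn h₁) (hn h₂)
      ((h _).trans (h _).symm)
  obtain ⟨e', he'⟩ := exists_end_eq_of_infinite C (hG.infinite_componentCompl_singleton hval C)
  exact ⟨e', fun h => hC (h ▸ he').symm⟩

section EndTopology

variable (G)

@[reducible]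
def componentComplTop (K : (Finset V)ᵒᵖ) : TopologicalSpace (G.componentComplFunctor.obj K) := ⊥

attribute [local instance] endTop componentComplTop

theorem discreteTopology_componentComplTop (K : (Finset V)ᵒᵖ) :
    DiscreteTopology (G.componentComplFunctor.obj K) :=
  ⟨rfl⟩

attribute [local instance] discreteTopology_componentComplTop

theorem isEmbedding_end_val :
    IsEmbedding (Subtype.val : G.end → ∀ K, G.componentComplFunctor.obj K) :=
  ⟨⟨rfl⟩, Subtype.val_injective⟩

theorem isClosed_end : IsClosed (G.end : Set (∀ K, G.componentComplFunctor.obj K)) := by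
  have : G.end = ⋂ (K) (L) (f : K ⟶ L), {s | G.componentComplFunctor.map f (s K) = s L} := by
    ext s
    simp only [Set.mem_iInter, Set.mem_ofPred_eq]
    exact ⟨fun h _ _ f => h f, fun h _ _ f => h _ _ f⟩
  rw [this]
  exact isClosed_iInter fun K => isClosed_iInter fun L => isClosed_iInter fun f =>
    isClosed_eq (continuous_of_discreteTopology.comp (continuous_apply K)) (continuous_apply L)

theorem compactSpace_end [G.LocallyFinite] [Fact G.Preconnected] : CompactSpace G.end :=
  IsClosedEmbedding.compactSpace (f := Subtype.val)
    ⟨G.isEmbedding_end_val, by rw [Subtype.range_coe]; exact G.isClosed_end⟩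

theorem t2Space_end : T2Space G.end :=
  G.isEmbedding_end_val.t2Space

theorem totallyDisconnectedSpace_end : TotallyDisconnectedSpace G.end :=
  G.isEmbedding_end_val.isTotallyDisconnected_range.mp
    (isTotallyDisconnected_of_totallyDisconnectedSpace _)

end EndTopology

end SimpleGraph

section IsolatedPoint

variable {X : Type*} [TopologicalSpace X] {x₀ : X}

theorem compactSpace_compl_of_isOpen_singleton [CompactSpace X] (h : IsOpen {x₀}) :
    CompactSpace ({x₀}ᶜ : Set X) :=
  isCompact_iff_compactSpace.mp h.isClosed_compl.isCompact

theorem not_isOpen_singleton_in_compl_singleton [T1Space X] (h : ∀ x : X, IsOpen {x} → x = x₀)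
    (p : ({x₀}ᶜ : Set X)) : ¬IsOpen {p} := fun hp =>
  p.2 (h _ (by simpa using isOpen_compl_singleton.isOpenMap_subtype_val _ hp))

end IsolatedPoint

/-- **The Julia set is a Cantor set.**
Let `F : T → T` be a polynomial-like branched covering of a simplicial tree.
Then the Julia set `J(F) = ∂T ∖ {infty}`, with the subspace topology from the
space of ends, is nonempty, compact, perfect (has no isolated points) and
totally disconnected. -/
theorem julia_set_is_cantor
    {V : Type} (T : TreeDyn V) (infty : T.G.end)
    (hpl : T.IsPolyLike infty) :
    Nonempty (JSet T infty) ∧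
    @CompactSpace (JSet T infty) (JTop T infty) ∧
    (∀ p : JSet T infty, ¬ @IsOpen (JSet T infty) (JTop T infty) {p}) ∧
    @TotallyDisconnectedSpace (JSet T infty) (JTop T infty) := by
  obtain ⟨-, hiso, huniq, hval, horb⟩ := hpl
  let : T.G.LocallyFinite := fun v => (T.locFin v).fintype
  have : Fact T.G.Preconnected := ⟨T.isTree.connected.preconnected⟩
  let := endTop T.G
  have := T.G.compactSpace_end
  have := T.G.t2Space_end
  have := T.G.totallyDisconnectedSpace_end
  obtain ⟨v⟩ := T.isTree.connected.nonempty
  obtain ⟨w, -, hw⟩ := horb v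
  obtain ⟨p, hp⟩ := T.isTree.exists_end_ne hval (w := w) (by omega) infty
  exact ⟨⟨⟨p, hp⟩⟩, compactSpace_compl_of_isOpen_singleton hiso,
    not_isOpen_singleton_in_compl_singleton huniq,
    inferInstanceAs (TotallyDisconnectedSpace {p // p ≠ infty})⟩
end
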